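/- Let d ≥ 1 be an integer, σ ≥ 0, L ≥ 0, Δ ≥ 0, Δ′ ≥ 0, γ₀ > 0. Define η_t = (2/(t+2))^{4/5} and γ_t = γ₀·2/(t+2) for integers t ≥ 0. On a probability space, let (ê_t)_{t≥0}, (e_t)_{t≥1}, (S_t)_{t≥1}, (Z_t)_{t≥1} be square-integrable ℝ^d-valued random sequences such that: (i) ê_t = (1 − η_t)·ê_{t−1} + η_t·e_t + (1 − η_t)·S_t + η_t·Z_t for all t ≥ 1; (ii) E[⟨e_s, e_t⟩] = 0 for all integers 1 ≤ s < t; (iii) E[‖e_t‖²] ≤ σ² for all t ≥ 1; (iv) E[‖ê_0‖] ≤ σ; (v) almost surely, ‖S_t‖ ≤ L·γ_{t−1}² + Δ + Δ′·γ_{t−1} and ‖Z_t‖ ≤ L·((1−η_t)²/η_t²)·γ_{t−1}² + Δ + Δ′·γ_{t−1}/η_t for all t ≥ 1. Then there exist absolute constants C₁, C₂, C₃, C₄ > 0 (independent of all the above data) such that for every integer T ≥ 1: E[‖ê_T‖] ≤ C₁·σ·η_T^{1/2} + C₂·L·γ_T²·η_T^{−2} + C₃·Δ·η_T^{−1} +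 C₄·Δ′·γ_T·η_T^{−1}. -/

import Mathlib

open MeasureTheory
open scoped RealInnerProductSpace

/-- The momentum parameter sequence `η_t = (2/(t+2))^{4/5}` of the N-PG-IGT analysis. -/
noncomputable def etaIGT (t : ℕ) : ℝ := (2 / ((t : ℝ) + 2)) ^ ((4 : ℝ) / 5)

/-- The step-size sequence `γ_t = γ₀ · 2/(t+2)` of the N-PG-IGT analysis. -/
noncomputable def gammaIGT (γ₀ : ℝ) (t : ℕ) : ℝ := γ₀ * (2 / ((t : ℝ) + 2))

/-!
Write `ê_t = u_t + r_t`, where `u` is the momentum average of the noise alone (`u_0 = 0`).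
Since the noises are uncorrelated, `E‖u_t‖² = (1 - η_t)² E‖u_{t-1}‖² + η_t² E‖e_t‖²`, and
`2σ²η_t` is a supersolution of this recursion, so `E‖u_t‖ ≤ 2σ √η_t`. The remainder satisfies
`r_t = (1 - η_t) r_{t-1} + (1 - η_t) S_t + η_t Z_t`, hence
`E‖r_t‖ ≤ (1 - η_t) E‖r_{t-1}‖ + 2Lγ_{t-1}²/η_t + 2Δ + 2Δ'γ_{t-1}`, and
`σ √η_t + 8Lγ_t²/η_t² + 2Δ/η_t + 4Δ'γ_t/η_t` is a supersolution of that one.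
With `ρ = (1 + 1/(t+1))^{1/5}` one has `η_{t-1} = ρ⁴ η_t` and `γ_{t-1} = ρ⁵ γ_t`, so both
supersolution inequalities reduce to Bernoulli bounds `ρ^k ≤ 1 + k/(5(t+1))` together with
`η_t ≥ 8/(7(t+1))`. This gives the constants `C = (3, 8, 2, 4)`.
-/

lemma le_of_linear_recursion {a b c k : ℕ → ℝ} (hc : ∀ n, 0 ≤ c n)
    (ha : ∀ n, a (n + 1) ≤ c n * a n + k n) (hb : ∀ n, c n * b n + k n ≤ b (n + 1))
    (h0 : a 0 ≤ b 0) (n : ℕ) : a n ≤ b n := by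
  induction n with
  | zero => exact h0
  | succ n ih =>
    calc a (n + 1) ≤ c n * a n + k n := ha n
      _ ≤ c n * b n + k n := by gcongr; exact hc n
      _ ≤ b (n + 1) := hb n

lemma norm_one_sub_smul_add_smul_le {E : Type*} [NormedAddCommGroup E] [NormedSpace ℝ E]
    {η γ L Δ Δ' : ℝ} {s z : E} (hη : 0 < η) (hη1 : η ≤ 1) (hγ : 0 ≤ γ) (hL : 0 ≤ L)
    (hΔ : 0 ≤ Δ) (hΔ' : 0 ≤ Δ') (hs : ‖s‖ ≤ L * γ ^ 2 + Δ + Δ' * γ)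
    (hz : ‖z‖ ≤ L * ((1 - η) ^ 2 / η ^ 2) * γ ^ 2 + Δ + Δ' * γ / η) :
    ‖(1 - η) • s + η • z‖ ≤ 2 * L * γ ^ 2 / η + 2 * Δ + 2 * Δ' * γ := by
  have hη1' : 0 ≤ 1 - η := sub_nonneg.2 hη1
  have hLγ : (1 - η) / η * (L * γ ^ 2) ≤ 2 * L * γ ^ 2 / η := by
    rw [div_mul_eq_mul_div, div_le_div_iff_of_pos_right hη]
    nlinarith [mul_nonneg hL (sq_nonneg γ)]
  calc ‖(1 - η) • s + η • z‖ ≤ (1 - η) * ‖s‖ + η * ‖z‖ := by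
        refine (norm_add_le _ _).trans_eq ?_
        rw [norm_smul, norm_smul, Real.norm_of_nonneg hη1', Real.norm_of_nonneg hη.le]
    _ ≤ (1 - η) * (L * γ ^ 2 + Δ + Δ' * γ)
        + η * (L * ((1 - η) ^ 2 / η ^ 2) * γ ^ 2 + Δ + Δ' * γ / η) := by gcongr
    _ = (1 - η) / η * (L * γ ^ 2) + Δ + (2 - η) * (Δ' * γ) := by field_simp; ring
    _ ≤ 2 * L * γ ^ 2 / η + 2 * Δ + 2 * Δ' * γ := by nlinarith [mul_nonneg hΔ' hγ]

section momentum

variable {Ω E : Type*} [MeasurableSpace Ω] {P : Measure Ω} [NormedAddCommGroup E]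

lemma sq_integral_norm_le_integral_norm_sq [IsProbabilityMeasure P] {f : Ω → E}
    (hf : MemLp f 2 P) : (∫ ω, ‖f ω‖ ∂P) ^ 2 ≤ ∫ ω, ‖f ω‖ ^ 2 ∂P := by
  have h := ProbabilityTheory.variance_nonneg (fun ω => ‖f ω‖) P
  rw [ProbabilityTheory.variance_eq_sub hf.norm, sub_nonneg] at h
  simpa using h

lemma integral_norm_le_integral_norm_add_integral_norm_sub {f g : Ω → E}
    (hf : Integrable f P) (hg : Integrable g P) :
    ∫ ω, ‖f ω‖ ∂P ≤ ∫ ω, ‖g ω‖ ∂P + ∫ ω, ‖f ω - g ω‖ ∂P := by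
  have hfg : Integrable (fun ω => ‖f ω - g ω‖) P := (hf.sub hg).norm
  rw [← integral_add hg.norm hfg]
  exact integral_mono hf.norm (hg.norm.add hfg)
    fun ω => norm_le_norm_add_norm_sub' (f ω) (g ω)

variable [InnerProductSpace ℝ E]

lemma integrable_inner_of_memLp_two {f g : Ω → E} (hf : MemLp f 2 P) (hg : MemLp g 2 P) :
    Integrable (fun ω => ⟪f ω, g ω⟫) P := by
  refine (L2.integrable_inner (𝕜 := ℝ) (hf.toLp f) (hg.toLp g)).congr ?_
  filter_upwards [hf.coeFn_toLp, hg.coeFn_toLp] with ω hfω hgω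
  rw [hfω, hgω]

/-- The part of the momentum estimator `x_t = (1 - η_t) x_{t-1} + η_t e_t + ...` driven by the
noise alone, started at `0`. -/
noncomputable def momentumNoise (η : ℕ → ℝ) (e : ℕ → Ω → E) : ℕ → Ω → E
  | 0 => 0
  | n + 1 => (1 - η (n + 1)) • momentumNoise η e n + η (n + 1) • e (n + 1)

variable {η : ℕ → ℝ} {e : ℕ → Ω → E}

lemma memLp_momentumNoise (he : ∀ t, MemLp (e t) 2 P) (t : ℕ) :
    MemLp (momentumNoise η e t) 2 P := by
  induction t with
  | zero => exact MemLp.zero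
  | succ n ih => exact (ih.const_smul _).add ((he (n + 1)).const_smul _)

lemma integral_inner_momentumNoise_eq_zero (he : ∀ t, MemLp (e t) 2 P)
    (horth : ∀ s t : ℕ, 1 ≤ s → s < t → ∫ ω, ⟪e s ω, e t ω⟫ ∂P = 0) {t m : ℕ} (htm : t < m) :
    ∫ ω, ⟪momentumNoise η e t ω, e m ω⟫ ∂P = 0 := by
  induction t with
  | zero => simp [momentumNoise]
  | succ n ih =>
    simp only [momentumNoise, Pi.add_apply, Pi.smul_apply, inner_add_left, real_inner_smul_left]
    rw [integral_add ((integrable_inner_of_memLp_two (memLp_momentumNoise he n) (he m)).const_mul _)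
      ((integrable_inner_of_memLp_two (he (n + 1)) (he m)).const_mul _),
      integral_const_mul, integral_const_mul, ih (by omega), horth (n + 1) m (by omega) htm]
    simp

lemma integral_norm_sq_momentumNoise_succ (he : ∀ t, MemLp (e t) 2 P)
    (horth : ∀ s t : ℕ, 1 ≤ s → s < t → ∫ ω, ⟪e s ω, e t ω⟫ ∂P = 0) (n : ℕ) :
    ∫ ω, ‖momentumNoise η e (n + 1) ω‖ ^ 2 ∂P
      = (1 - η (n + 1)) ^ 2 * ∫ ω, ‖momentumNoise η e n ω‖ ^ 2 ∂P
        + η (n + 1) ^ 2 * ∫ ω, ‖e (n + 1) ω‖ ^ 2 ∂P := by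
  set u := momentumNoise η e
  have hu : MemLp (u n) 2 P := memLp_momentumNoise he n
  have hexp : ∀ ω, ‖u (n + 1) ω‖ ^ 2 = (1 - η (n + 1)) ^ 2 * ‖u n ω‖ ^ 2
      + 2 * (1 - η (n + 1)) * η (n + 1) * ⟪u n ω, e (n + 1) ω⟫
      + η (n + 1) ^ 2 * ‖e (n + 1) ω‖ ^ 2 := by
    intro ω
    simp only [u, momentumNoise, Pi.add_apply, Pi.smul_apply, norm_add_sq_real, norm_smul,
      real_inner_smul_left, real_inner_smul_right, mul_pow, Real.norm_eq_abs, sq_abs]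
    ring
  have hsq : ∀ {f : Ω → E}, MemLp f 2 P → Integrable (fun ω => ‖f ω‖ ^ 2) P :=
    fun hf => (memLp_two_iff_integrable_sq_norm hf.1).1 hf
  have hinner := integrable_inner_of_memLp_two hu (he (n + 1))
  simp_rw [hexp]
  rw [integral_add (((hsq hu).const_mul _).fun_add (hinner.const_mul _))
      ((hsq (he (n + 1))).const_mul _),
    integral_add ((hsq hu).const_mul _) (hinner.const_mul _),
    integral_const_mul, integral_const_mul, integral_const_mul,
    integral_inner_momentumNoise_eq_zero he horth (Nat.lt_succ_self n)]
  ring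

lemma integral_norm_sub_momentumNoise_succ_le [IsProbabilityMeasure P]
    {x : ℕ → Ω → E} {w : Ω → E} {K : ℝ} (hx : ∀ t, MemLp (x t) 2 P) (he : ∀ t, MemLp (e t) 2 P)
    {n : ℕ} (hrec : ∀ ω, x (n + 1) ω = (1 - η (n + 1)) • x n ω + η (n + 1) • e (n + 1) ω + w ω)
    (hη : η (n + 1) ≤ 1) (hw : ∀ᵐ ω ∂P, ‖w ω‖ ≤ K) :
    ∫ ω, ‖x (n + 1) ω - momentumNoise η e (n + 1) ω‖ ∂P
      ≤ (1 - η (n + 1)) * ∫ ω, ‖x n ω - momentumNoise η e n ω‖ ∂P + K := by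
  have hη' : 0 ≤ 1 - η (n + 1) := sub_nonneg.2 hη
  have hint (t : ℕ) : Integrable (fun ω => ‖x t ω - momentumNoise η e t ω‖) P :=
    (((hx t).sub (memLp_momentumNoise he t)).integrable one_le_two).norm
  have hdiff (ω : Ω) : x (n + 1) ω - momentumNoise η e (n + 1) ω
      = (1 - η (n + 1)) • (x n ω - momentumNoise η e n ω) + w ω := by
    simp only [hrec, momentumNoise, Pi.add_apply, Pi.smul_apply, smul_sub]
    abel
  calc ∫ ω, ‖x (n + 1) ω - momentumNoise η e (n + 1) ω‖ ∂P
      ≤ ∫ ω, ((1 - η (n + 1)) * ‖x n ω - momentumNoise η e n ω‖ + K) ∂P := by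
        refine integral_mono_ae (hint _) (((hint n).const_mul _).add (integrable_const K)) ?_
        filter_upwards [hw] with ω hwω
        rw [hdiff]
        refine (norm_add_le _ _).trans ?_
        rw [norm_smul, Real.norm_of_nonneg hη']
        gcongr
    _ = (1 - η (n + 1)) * ∫ ω, ‖x n ω - momentumNoise η e n ω‖ ∂P + K := by
        rw [integral_add ((hint n).const_mul _) (integrable_const K), integral_const_mul]
        simp

end momentum

lemma etaIGT_pos (t : ℕ) : 0 < etaIGT t := by
  unfold etaIGT; positivity

lemma etaIGT_zero : etaIGT 0 = 1 := by
  simp [etaIGT]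

lemma div_le_etaIGT (t : ℕ) : 2 / ((t : ℝ) + 2) ≤ etaIGT t := by
  have hle : 2 / ((t : ℝ) + 2) ≤ 1 := by
    rw [div_le_one (by positivity)]; linarith [t.cast_nonneg (α := ℝ)]
  simpa [etaIGT] using Real.rpow_le_rpow_of_exponent_ge (by positivity) hle
    (show (4 : ℝ) / 5 ≤ 1 by norm_num)

lemma etaIGT_le_one (t : ℕ) : etaIGT t ≤ 1 := by
  refine Real.rpow_le_one (by positivity) ?_ (by norm_num)
  rw [div_le_one (by positivity)]
  linarith [t.cast_nonneg (α := ℝ)]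

lemma gammaIGT_nonneg {γ₀ : ℝ} (hγ₀ : 0 ≤ γ₀) (t : ℕ) : 0 ≤ gammaIGT γ₀ t := by
  unfold gammaIGT; positivity

/-- `(γ_n / γ_{n+1})^{1/5}`: both `η_n / η_{n+1}` and `γ_n / γ_{n+1}` are integer powers of it. -/
noncomputable def ratioIGT (n : ℕ) : ℝ := (1 + ((n : ℝ) + 2)⁻¹) ^ ((1 : ℝ) / 5)

section ratioIGT

variable (n : ℕ)

lemma ratioIGT_pow (k : ℕ) : ratioIGT n ^ k = (1 + ((n : ℝ) + 2)⁻¹) ^ ((k : ℝ) / 5) := by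
  rw [ratioIGT, ← Real.rpow_natCast, ← Real.rpow_mul (by positivity)]
  ring_nf

lemma ratioIGT_pow_five : ratioIGT n ^ 5 = 1 + ((n : ℝ) + 2)⁻¹ := by
  simp [ratioIGT_pow]

lemma one_le_ratioIGT : 1 ≤ ratioIGT n :=
  Real.one_le_rpow (by simp; positivity) (by norm_num)

lemma ratioIGT_pow_le {k : ℕ} (hk : k ≤ 5) :
    ratioIGT n ^ k ≤ 1 + k / 5 * ((n : ℝ) + 2)⁻¹ := by
  rw [ratioIGT_pow]
  have hx : (0 : ℝ) ≤ ((n : ℝ) + 2)⁻¹ := by positivity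
  exact rpow_one_add_le_one_add_mul_self (by linarith) (by positivity)
    (by rw [div_le_one (by norm_num)]; exact_mod_cast hk)

lemma etaIGT_eq_etaIGT_succ_mul : etaIGT n = etaIGT (n + 1) * ratioIGT n ^ 4 := by
  rw [ratioIGT_pow, etaIGT, etaIGT, Nat.cast_ofNat, ← Real.mul_rpow (by positivity) (by positivity)]
  congr 1
  push_cast; field_simp; ring

lemma etaIGT_rpow_half_eq_mul :
    etaIGT n ^ ((1 : ℝ) / 2) = etaIGT (n + 1) ^ ((1 : ℝ) / 2) * ratioIGT n ^ 2 := by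
  rw [etaIGT_eq_etaIGT_succ_mul, Real.mul_rpow (etaIGT_pos _).le (by positivity),
    ← Real.rpow_natCast (ratioIGT n) 2, ← Real.rpow_natCast (ratioIGT n) 4,
    ← Real.rpow_mul (zero_le_one.trans (one_le_ratioIGT n))]
  norm_num

lemma gammaIGT_eq_gammaIGT_succ_mul (γ₀ : ℝ) :
    gammaIGT γ₀ n = gammaIGT γ₀ (n + 1) * ratioIGT n ^ 5 := by
  rw [ratioIGT_pow_five, gammaIGT, gammaIGT]
  push_cast; field_simp; ring

lemma etaIGT_succ_ge : 8 / 7 * ((n : ℝ) + 2)⁻¹ ≤ etaIGT (n + 1) := by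
  have hx_eta : ((n : ℝ) + 2)⁻¹ ^ ((4 : ℝ) / 5) ≤ etaIGT (n + 1) := by
    refine Real.rpow_le_rpow (by positivity) ?_ (by norm_num)
    rw [inv_eq_one_div, div_le_div_iff₀ (by positivity) (by positivity)]
    push_cast; linarith
  set x := ((n : ℝ) + 2)⁻¹
  have hx : 0 < x := by positivity
  have hx_le : x ≤ 1 / 2 := by rw [inv_le_comm₀ (by positivity) (by norm_num)]; norm_num
  have hroot : x ^ ((1 : ℝ) / 5) ≤ 7 / 8 := by
    refine (Real.rpow_le_rpow hx.le hx_le (by norm_num)).trans ?_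
    refine le_of_pow_le_pow_left₀ (n := 5) (by norm_num) (by norm_num) ?_
    rw [← Real.rpow_natCast, ← Real.rpow_mul (by norm_num)]
    norm_num
  have hsplit : x = x ^ ((4 : ℝ) / 5) * x ^ ((1 : ℝ) / 5) := by
    rw [← Real.rpow_add hx]; norm_num
  nlinarith [Real.rpow_pos_of_pos hx ((4 : ℝ) / 5)]

end ratioIGT

section drift

variable (n : ℕ)

lemma one_sub_etaIGT_sq_mul_etaIGT_add_sq_le :
    2 * (1 - etaIGT (n + 1)) ^ 2 * etaIGT n + etaIGT (n + 1) ^ 2 ≤ 2 * etaIGT (n + 1) := by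
  have hlow : 2 * ((n : ℝ) + 2)⁻¹ ≤ etaIGT n := by simpa [div_eq_mul_inv] using div_le_etaIGT n
  rw [etaIGT_eq_etaIGT_succ_mul n] at hlow ⊢
  have hη := etaIGT_pos (n + 1)
  have hc4 := ratioIGT_pow_le n (k := 4) (by norm_num)
  have hc1 : 1 ≤ ratioIGT n ^ 4 := one_le_pow₀ (one_le_ratioIGT n)
  push_cast at hc4
  nlinarith [mul_nonneg (sq_nonneg (1 - etaIGT (n + 1))) hη.le,
    mul_le_mul_of_nonneg_left hc4 (mul_nonneg hη.le hη.le),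
    mul_le_mul_of_nonneg_left hlow hη.le,
    mul_le_mul_of_nonneg_left hc1 (mul_nonneg hη.le hη.le), etaIGT_le_one (n + 1)]

lemma one_sub_etaIGT_mul_rpow_half_le :
    (1 - etaIGT (n + 1)) * etaIGT n ^ ((1 : ℝ) / 2) ≤ etaIGT (n + 1) ^ ((1 : ℝ) / 2) := by
  have hc2 := ratioIGT_pow_le n (k := 2) (by norm_num)
  have hlow := etaIGT_succ_ge n
  push_cast at hc2
  have key : (1 - etaIGT (n + 1)) * ratioIGT n ^ 2 ≤ 1 := by
    nlinarith [show (0 : ℝ) < ((n : ℝ) + 2)⁻¹ by positivity, etaIGT_le_one (n + 1)]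
  rw [etaIGT_rpow_half_eq_mul, mul_left_comm]
  exact mul_le_of_le_one_right (Real.rpow_nonneg (etaIGT_pos _).le _) key

lemma one_sub_etaIGT_div_etaIGT_add_le :
    2 * (1 - etaIGT (n + 1)) / etaIGT n + 2 ≤ 2 / etaIGT (n + 1) := by
  have hη := etaIGT_pos (n + 1)
  have hmono : etaIGT (n + 1) ≤ etaIGT n := by
    rw [etaIGT_eq_etaIGT_succ_mul n]
    exact le_mul_of_one_le_right hη.le (one_le_pow₀ (one_le_ratioIGT n))
  calc 2 * (1 - etaIGT (n + 1)) / etaIGT n + 2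
      ≤ 2 * (1 - etaIGT (n + 1)) / etaIGT (n + 1) + 2 := by
        gcongr
        linarith [etaIGT_le_one (n + 1)]
    _ = 2 / etaIGT (n + 1) := by field_simp; ring

lemma one_sub_etaIGT_mul_gammaIGT_div_add_le {γ₀ : ℝ} (hγ₀ : 0 ≤ γ₀) :
    4 * (1 - etaIGT (n + 1)) * gammaIGT γ₀ n / etaIGT n + 2 * gammaIGT γ₀ n
      ≤ 4 * gammaIGT γ₀ (n + 1) / etaIGT (n + 1) := by
  have hη := etaIGT_pos (n + 1)
  have hc1 := ratioIGT_pow_le n (k := 1) (by norm_num)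
  have hc5 := ratioIGT_pow_five n
  have hlow := etaIGT_succ_ge n
  push_cast at hc1
  rw [pow_one] at hc1
  have key : 4 * (1 - etaIGT (n + 1)) * ratioIGT n + 2 * etaIGT (n + 1) * ratioIGT n ^ 5 ≤ 4 := by
    nlinarith [show (0 : ℝ) < ((n : ℝ) + 2)⁻¹ by positivity, etaIGT_le_one (n + 1),
      one_le_ratioIGT n]
  rw [etaIGT_eq_etaIGT_succ_mul n, gammaIGT_eq_gammaIGT_succ_mul n γ₀]
  calc _ = gammaIGT γ₀ (n + 1) / etaIGT (n + 1) *
        (4 * (1 - etaIGT (n + 1)) * ratioIGT n + 2 * etaIGT (n + 1) * ratioIGT n ^ 5) := by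
        field_simp
    _ ≤ gammaIGT γ₀ (n + 1) / etaIGT (n + 1) * 4 := by
        gcongr
        exact div_nonneg (gammaIGT_nonneg hγ₀ _) hη.le
    _ = _ := by ring

lemma one_sub_etaIGT_mul_gammaIGT_sq_div_add_le (γ₀ : ℝ) :
    8 * (1 - etaIGT (n + 1)) * gammaIGT γ₀ n ^ 2 / etaIGT n ^ 2
        + 2 * gammaIGT γ₀ n ^ 2 / etaIGT (n + 1)
      ≤ 8 * gammaIGT γ₀ (n + 1) ^ 2 / etaIGT (n + 1) ^ 2 := by
  have hη := etaIGT_pos (n + 1)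
  have hc2 := ratioIGT_pow_le n (k := 2) (by norm_num)
  have hc5 := ratioIGT_pow_five n
  have hlow := etaIGT_succ_ge n
  push_cast at hc2
  have hx : (0 : ℝ) < ((n : ℝ) + 2)⁻¹ := by positivity
  have key : 8 * (1 - etaIGT (n + 1)) * ratioIGT n ^ 2 + 2 * etaIGT (n + 1) * (ratioIGT n ^ 5) ^ 2
      ≤ 8 := by
    rw [hc5]
    have h1 : 8 * (1 - etaIGT (n + 1)) * ratioIGT n ^ 2
        ≤ 8 * (1 - etaIGT (n + 1)) * (1 + 2 / 5 * ((n : ℝ) + 2)⁻¹) :=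
      mul_le_mul_of_nonneg_left hc2 (by linarith [etaIGT_le_one (n + 1)])
    nlinarith [mul_nonneg hη.le hx.le, mul_nonneg (mul_nonneg hη.le hx.le) hx.le,
      mul_nonneg hx.le hx.le, etaIGT_le_one (n + 1)]
  rw [etaIGT_eq_etaIGT_succ_mul n, gammaIGT_eq_gammaIGT_succ_mul n γ₀]
  calc _ = gammaIGT γ₀ (n + 1) ^ 2 / etaIGT (n + 1) ^ 2
        * (8 * (1 - etaIGT (n + 1)) * ratioIGT n ^ 2
          + 2 * etaIGT (n + 1) * (ratioIGT n ^ 5) ^ 2) := by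
        field_simp
    _ ≤ gammaIGT γ₀ (n + 1) ^ 2 / etaIGT (n + 1) ^ 2 * 8 := by gcongr
    _ = _ := by ring

end drift

noncomputable def errorBoundIGT (σ L Δ Δ' γ₀ : ℝ) (t : ℕ) : ℝ :=
  σ * etaIGT t ^ ((1 : ℝ) / 2) + 8 * L * gammaIGT γ₀ t ^ 2 / etaIGT t ^ 2
    + 2 * Δ / etaIGT t + 4 * Δ' * gammaIGT γ₀ t / etaIGT t

lemma errorBoundIGT_succ {σ L Δ Δ' γ₀ : ℝ} (hσ : 0 ≤ σ) (hL : 0 ≤ L) (hΔ : 0 ≤ Δ) (hΔ' : 0 ≤ Δ')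
    (hγ₀ : 0 ≤ γ₀) (n : ℕ) :
    (1 - etaIGT (n + 1)) * errorBoundIGT σ L Δ Δ' γ₀ n
        + (2 * L * gammaIGT γ₀ n ^ 2 / etaIGT (n + 1) + 2 * Δ + 2 * Δ' * gammaIGT γ₀ n)
      ≤ errorBoundIGT σ L Δ Δ' γ₀ (n + 1) := by
  calc _ = σ * ((1 - etaIGT (n + 1)) * etaIGT n ^ ((1 : ℝ) / 2))
        + L * (8 * (1 - etaIGT (n + 1)) * gammaIGT γ₀ n ^ 2 / etaIGT n ^ 2
          + 2 * gammaIGT γ₀ n ^ 2 / etaIGT (n + 1))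
        + Δ * (2 * (1 - etaIGT (n + 1)) / etaIGT n + 2)
        + Δ' * (4 * (1 - etaIGT (n + 1)) * gammaIGT γ₀ n / etaIGT n + 2 * gammaIGT γ₀ n) := by
        unfold errorBoundIGT; ring
    _ ≤ σ * etaIGT (n + 1) ^ ((1 : ℝ) / 2)
        + L * (8 * gammaIGT γ₀ (n + 1) ^ 2 / etaIGT (n + 1) ^ 2)
        + Δ * (2 / etaIGT (n + 1))
        + Δ' * (4 * gammaIGT γ₀ (n + 1) / etaIGT (n + 1)) := by
        gcongr ?_ + ?_ + ?_ + ?_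
        · exact mul_le_mul_of_nonneg_left (one_sub_etaIGT_mul_rpow_half_le n) hσ
        · exact mul_le_mul_of_nonneg_left (one_sub_etaIGT_mul_gammaIGT_sq_div_add_le n γ₀) hL
        · exact mul_le_mul_of_nonneg_left (one_sub_etaIGT_div_etaIGT_add_le n) hΔ
        · exact mul_le_mul_of_nonneg_left (one_sub_etaIGT_mul_gammaIGT_div_add_le n hγ₀) hΔ'
    _ = _ := by unfold errorBoundIGT; ring

section momentumIGT

variable {Ω E : Type*} [MeasurableSpace Ω] {P : Measure Ω}
  [NormedAddCommGroup E] [InnerProductSpace ℝ E] {e : ℕ → Ω → E} {σ : ℝ}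

lemma integral_norm_sq_momentumNoise_etaIGT_le (he : ∀ t, MemLp (e t) 2 P)
    (horth : ∀ s t : ℕ, 1 ≤ s → s < t → ∫ ω, ⟪e s ω, e t ω⟫ ∂P = 0)
    (hvar : ∀ t : ℕ, 1 ≤ t → ∫ ω, ‖e t ω‖ ^ 2 ∂P ≤ σ ^ 2) (t : ℕ) :
    ∫ ω, ‖momentumNoise etaIGT e t ω‖ ^ 2 ∂P ≤ 2 * σ ^ 2 * etaIGT t := by
  refine le_of_linear_recursion (a := fun t => ∫ ω, ‖momentumNoise etaIGT e t ω‖ ^ 2 ∂P)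
    (b := fun t => 2 * σ ^ 2 * etaIGT t) (c := fun n => (1 - etaIGT (n + 1)) ^ 2)
    (k := fun n => etaIGT (n + 1) ^ 2 * σ ^ 2) (fun n => sq_nonneg _) (fun n => ?_) (fun n => ?_)
    ?_ t
  · rw [integral_norm_sq_momentumNoise_succ he horth]
    gcongr
    exact hvar _ n.succ_pos
  · nlinarith [mul_le_mul_of_nonneg_left (one_sub_etaIGT_sq_mul_etaIGT_add_sq_le n) (sq_nonneg σ)]
  · simpa [momentumNoise, etaIGT_zero] using sq_nonneg σ

lemma integral_norm_momentumNoise_etaIGT_le [IsProbabilityMeasure P] (he : ∀ t, MemLp (e t) 2 P)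
    (horth : ∀ s t : ℕ, 1 ≤ s → s < t → ∫ ω, ⟪e s ω, e t ω⟫ ∂P = 0)
    (hvar : ∀ t : ℕ, 1 ≤ t → ∫ ω, ‖e t ω‖ ^ 2 ∂P ≤ σ ^ 2) (hσ : 0 ≤ σ) (t : ℕ) :
    ∫ ω, ‖momentumNoise etaIGT e t ω‖ ∂P ≤ 2 * σ * etaIGT t ^ ((1 : ℝ) / 2) := by
  have hη := etaIGT_pos t
  rw [← Real.sqrt_eq_rpow]
  refine le_of_pow_le_pow_left₀ two_ne_zero (by positivity) ?_
  calc (∫ ω, ‖momentumNoise etaIGT e t ω‖ ∂P) ^ 2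
      ≤ ∫ ω, ‖momentumNoise etaIGT e t ω‖ ^ 2 ∂P :=
        sq_integral_norm_le_integral_norm_sq (memLp_momentumNoise he t)
    _ ≤ 2 * σ ^ 2 * etaIGT t := integral_norm_sq_momentumNoise_etaIGT_le he horth hvar t
    _ ≤ (2 * σ * √(etaIGT t)) ^ 2 := by
        rw [mul_pow, Real.sq_sqrt hη.le]
        nlinarith [sq_nonneg σ]

lemma integral_norm_sub_momentumNoise_etaIGT_le [IsProbabilityMeasure P] {L Δ Δ' γ₀ : ℝ}
    (hσ : 0 ≤ σ) (hL : 0 ≤ L) (hΔ : 0 ≤ Δ) (hΔ' : 0 ≤ Δ') (hγ₀ : 0 ≤ γ₀)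
    {x S Z : ℕ → Ω → E} (hx : ∀ t, MemLp (x t) 2 P) (he : ∀ t, MemLp (e t) 2 P)
    (hrec : ∀ t : ℕ, 1 ≤ t → ∀ ω, x t ω =
      (1 - etaIGT t) • x (t - 1) ω + etaIGT t • e t ω
        + (1 - etaIGT t) • S t ω + etaIGT t • Z t ω)
    (h0 : ∫ ω, ‖x 0 ω‖ ∂P ≤ σ)
    (hSZ : ∀ t : ℕ, 1 ≤ t → ∀ᵐ ω ∂P,
      ‖S t ω‖ ≤ L * (gammaIGT γ₀ (t - 1)) ^ 2 + Δ + Δ' * gammaIGT γ₀ (t - 1) ∧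
      ‖Z t ω‖ ≤ L * ((1 - etaIGT t) ^ 2 / (etaIGT t) ^ 2) * (gammaIGT γ₀ (t - 1)) ^ 2
        + Δ + Δ' * gammaIGT γ₀ (t - 1) / etaIGT t) (t : ℕ) :
    ∫ ω, ‖x t ω - momentumNoise etaIGT e t ω‖ ∂P ≤ errorBoundIGT σ L Δ Δ' γ₀ t := by
  refine le_of_linear_recursion (a := fun t => ∫ ω, ‖x t ω - momentumNoise etaIGT e t ω‖ ∂P)
    (c := fun n => 1 - etaIGT (n + 1))
    (k := fun n => 2 * L * gammaIGT γ₀ n ^ 2 / etaIGT (n + 1) + 2 * Δ + 2 * Δ' * gammaIGT γ₀ n)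
    (fun n => sub_nonneg.2 (etaIGT_le_one _)) (fun n => ?_)
    (errorBoundIGT_succ hσ hL hΔ hΔ' hγ₀) ?_ t
  · refine integral_norm_sub_momentumNoise_succ_le hx he
      (w := (1 - etaIGT (n + 1)) • S (n + 1) + etaIGT (n + 1) • Z (n + 1))
      (fun ω => by simp [hrec (n + 1) n.succ_pos ω, add_assoc]) (etaIGT_le_one _) ?_
    filter_upwards [hSZ (n + 1) n.succ_pos] with ω ⟨hS, hZ⟩
    rw [Nat.add_sub_cancel] at hS hZ
    exact norm_one_sub_smul_add_smul_le (etaIGT_pos _) (etaIGT_le_one _)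
      (gammaIGT_nonneg hγ₀ n) hL hΔ hΔ' hS hZ
  · have hγ := gammaIGT_nonneg hγ₀ 0
    simp only [momentumNoise, Pi.zero_apply, sub_zero, errorBoundIGT, etaIGT_zero,
      Real.one_rpow, one_pow, div_one, mul_one]
    nlinarith [mul_nonneg hL (sq_nonneg (gammaIGT γ₀ 0)), mul_nonneg hΔ' hγ]

end momentumIGT

/-- error bound for the N-PG-IGT momentum estimator, abstract form.
There are absolute constants `C₁, C₂, C₃, C₄ > 0` such that for any data satisfying
`ê_t = (1-η_t) ê_{t-1} + η_t e_t + (1-η_t) S_t + η_t Z_t` with pairwise uncorrelated noises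
`e_t` of second moment at most `σ²`, `E‖ê_0‖ ≤ σ`, and the almost sure bounds
`‖S_t‖ ≤ L γ_{t-1}² + Δ + Δ' γ_{t-1}` and
`‖Z_t‖ ≤ L ((1-η_t)²/η_t²) γ_{t-1}² + Δ + Δ' γ_{t-1}/η_t`, one has for all `T ≥ 1`,
`E‖ê_T‖ ≤ C₁ σ η_T^{1/2} + C₂ L γ_T² η_T⁻² + C₃ Δ η_T⁻¹ + C₄ Δ' γ_T η_T⁻¹`. -/
theorem stmt_14 :
    ∃ C₁ > (0 : ℝ), ∃ C₂ > (0 : ℝ), ∃ C₃ > (0 : ℝ), ∃ C₄ > (0 : ℝ),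
      ∀ (d : ℕ), 1 ≤ d →
      ∀ (σ L Δ Δ' γ₀ : ℝ), 0 ≤ σ → 0 ≤ L → 0 ≤ Δ → 0 ≤ Δ' → 0 < γ₀ →
      ∀ (Ω : Type) [MeasurableSpace Ω] (P : Measure Ω) [IsProbabilityMeasure P]
        (ehat e S Z : ℕ → Ω → EuclideanSpace ℝ (Fin d)),
        (∀ t, MemLp (ehat t) 2 P) →
        (∀ t, MemLp (e t) 2 P) →
        (∀ t, MemLp (S t) 2 P) →
        (∀ t, MemLp (Z t) 2 P) →
        (∀ t : ℕ, 1 ≤ t → ∀ ω, ehat t ω =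
          (1 - etaIGT t) • ehat (t - 1) ω + etaIGT t • e t ω
            + (1 - etaIGT t) • S t ω + etaIGT t • Z t ω) →
        (∀ s t : ℕ, 1 ≤ s → s < t → ∫ ω, ⟪e s ω, e t ω⟫ ∂P = 0) →
        (∀ t : ℕ, 1 ≤ t → ∫ ω, ‖e t ω‖ ^ 2 ∂P ≤ σ ^ 2) →
        (∫ ω, ‖ehat 0 ω‖ ∂P ≤ σ) →
        (∀ t : ℕ, 1 ≤ t → ∀ᵐ ω ∂P,
          ‖S t ω‖ ≤ L * (gammaIGT γ₀ (t - 1)) ^ 2 + Δ + Δ' * gammaIGT γ₀ (t - 1) ∧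
          ‖Z t ω‖ ≤ L * ((1 - etaIGT t) ^ 2 / (etaIGT t) ^ 2) * (gammaIGT γ₀ (t - 1)) ^ 2
            + Δ + Δ' * gammaIGT γ₀ (t - 1) / etaIGT t) →
        ∀ T : ℕ, 1 ≤ T →
          ∫ ω, ‖ehat T ω‖ ∂P ≤
            C₁ * σ * (etaIGT T) ^ ((1 : ℝ) / 2)
              + C₂ * L * (gammaIGT γ₀ T) ^ 2 * ((etaIGT T) ^ 2)⁻¹
              + C₃ * Δ * (etaIGT T)⁻¹
              + C₄ * Δ' * gammaIGT γ₀ T * (etaIGT T)⁻¹ := by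
  refine ⟨3, by norm_num, 8, by norm_num, 2, by norm_num, 4, by norm_num, ?_⟩
  intro d _ σ L Δ Δ' γ₀ hσ hL hΔ hΔ' hγ₀ Ω _ P _ ehat e S Z hehat he _ _ hrec horth hvar h0 hSZ T _
  have hnoise := integral_norm_momentumNoise_etaIGT_le he horth hvar hσ T
  have hrest := integral_norm_sub_momentumNoise_etaIGT_le hσ hL hΔ hΔ' hγ₀.le hehat he hrec h0 hSZ T
  have hsplit := integral_norm_le_integral_norm_add_integral_norm_sub
    ((hehat T).integrable one_le_two)
    ((memLp_momentumNoise (η := etaIGT) he T).integrable one_le_two)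
  calc ∫ ω, ‖ehat T ω‖ ∂P
      ≤ 2 * σ * etaIGT T ^ ((1 : ℝ) / 2) + errorBoundIGT σ L Δ Δ' γ₀ T := by linarith
    _ = _ := by unfold errorBoundIGT; ring
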